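/- arXiv:1709.06163 — 2 statements merged into one kernel-verified Lean document; each statement's English description precedes it below -/
import Mathlib

section
/- Let G be a finite simple graph with m edges and maximum degree at most r, and let T be a cluster of G with red graph R and blue edge set B satisfying e(B) ≥ e(R). Then the folding G_T of G at T satisfies k_3(G_T) − k_3(G) ≥ Q(R), where Q(R) = (r + 1 − s)·e(R) + k_3(R) − Σ_{v ∈ S_T} C(d_R(v), 2) and s = |S_T|. Moreover G_T has at most m edges and maximum degree at most r. -/
open scoped Classical
open Finset

variable {V : Type} [Fintype V] [DecidableEq V]

/-- A tight clique for the parameter `r`: a complete subgraph `T` all of whose edges `xy` are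
tight, i.e. have weight `w(xy) = |N(x) ∩ N(y)| = r − 1`. -/
def IsTightClique (G : SimpleGraph V) (r : ℕ) (T : Finset V) : Prop :=
  G.IsClique ↑T ∧ ∀ x ∈ T, ∀ y ∈ T, x ≠ y →
    (G.neighborFinset x ∩ G.neighborFinset y).card = r - 1

/-- A cluster: a maximal tight clique. -/
def IsCluster (G : SimpleGraph V) (r : ℕ) (T : Finset V) : Prop :=
  IsTightClique G r T ∧ ∀ T' : Finset V, IsTightClique G r T' → T ⊆ T' → T' = T

/-- `S_T = ⋂_{v ∈ T} N(v)`, the set of common neighbors of the vertices of `T`. -/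
noncomputable def commonNbrs (G : SimpleGraph V) (T : Finset V) : Finset V :=
  Finset.univ.filter fun u => ∀ v ∈ T, G.Adj v u

/-- The red graph `R_T`: the complement of the induced subgraph `G[S]` (for `S = S_T`), viewed
as the graph on `V` whose edges are the non-adjacent pairs of distinct vertices of `S`. -/
def redGraph (G : SimpleGraph V) (S : Finset V) : SimpleGraph V where
  Adj u v := u ∈ S ∧ v ∈ S ∧ u ≠ v ∧ ¬G.Adj u v
  symm := by
    constructor
    intro u v h
    exact ⟨h.2.1, h.1, h.2.2.1.symm, fun h' => h.2.2.2 h'.symm⟩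
  loopless := by
    constructor
    intro u h
    exact h.2.2.1 rfl

/-- A blue edge: an edge of `G` with one endpoint in `S_T` and the other outside `T ∪ S_T`. -/
def IsBlueEdge (G : SimpleGraph V) (T : Finset V) (u v : V) : Prop :=
  G.Adj u v ∧ ((u ∈ commonNbrs G T ∧ v ∉ T ∪ commonNbrs G T) ∨
    (v ∈ commonNbrs G T ∧ u ∉ T ∪ commonNbrs G T))

/-- The graph `B_T` of blue edges. -/
def blueGraph (G : SimpleGraph V) (T : Finset V) : SimpleGraph V where
  Adj u v := IsBlueEdge G T u v
  symm := by
    constructor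
    intro u v h
    exact ⟨h.1.symm, h.2.symm⟩
  loopless := ⟨fun u h => G.irrefl h.1⟩

/-- The folding `G_T` of `G` at the cluster `T`: add all missing pairs inside `S_T` (so that
`T ∪ S_T` induces a complete graph) and delete all blue edges. -/
def folding (G : SimpleGraph V) (T : Finset V) : SimpleGraph V where
  Adj u v := u ≠ v ∧ (G.Adj u v ∨ (u ∈ commonNbrs G T ∧ v ∈ commonNbrs G T)) ∧
    ¬IsBlueEdge G T u v
  symm := by
    constructor
    intro u v h
    obtain ⟨h1, h2, h3⟩ := h
    refine ⟨h1.symm, ?_, ?_⟩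
    · rcases h2 with h | h
      · exact Or.inl h.symm
      · exact Or.inr ⟨h.2, h.1⟩
    · intro hb
      exact h3 ⟨hb.1.symm, hb.2.symm⟩
  loopless := ⟨fun u h => h.1 rfl⟩

/-!
Put `S = S_T`, `W = T ∪ S` (so `#W = r + 1`) and `e = e(R)`. As `G` has maximum degree at most
`r`, every vertex of `T` is adjacent exactly to the rest of `W`, and a vertex `u ∈ S` has at most
`d_R(u)` neighbours outside `W`.

A triangle of `G` destroyed by the folding contains a blue edge `uv` (`u ∈ S`, `v ∉ W`); its third
vertex is not in `T`, so it contains a second blue edge. A blue edge at `u` lies in at most `s - 2`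
triangles and there are at most `Σ_u d_R(u) = 2e` blue edges, so double counting bounds the loss
by `e (s - 2)`.

Every triple of `W` containing a red pair is a new triangle. A triple spanning `p` red pairs
contributes `p` to `e (r - 1)`, `[p = 3]` to `k₃(R)` and `C(p, 2)` to `Σ_v C(d_R(v), 2)`, and
`p + [p = 3] - C(p, 2) = [p ≠ 0]`.

The edge count changes by `e(R) - e(B) ≤ 0`, and in `G_T` a vertex of `S` has no neighbours
outside `W`.
-/

lemma Finset.natCast_card_sub_natCast_card {α : Type*} [DecidableEq α] (s t : Finset α) :
    (#s : ℤ) - #t = #(s \ t) - #(t \ s) := by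
  have hs := card_sdiff_add_card_inter s t
  have ht := card_sdiff_add_card_inter t s
  rw [inter_comm] at ht
  omega

namespace SimpleGraph

section Degree

variable {α : Type*} [Fintype α] (R : SimpleGraph α) {W : Finset α}

lemma degree_eq_zero_of_notMem (hW : ∀ x y, R.Adj x y → x ∈ W) {x : α} (hx : x ∉ W) :
    R.degree x = 0 :=
  card_eq_zero.2 <| eq_empty_of_forall_notMem fun y hy =>
    hx (hW x y ((mem_neighborFinset R x y).1 hy))

lemma sum_comp_degree_eq_of_adj_mem (hW : ∀ x y, R.Adj x y → x ∈ W) (f : ℕ → ℕ) (hf : f 0 = 0) :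
    ∑ x ∈ W, f (R.degree x) = ∑ x, f (R.degree x) :=
  sum_subset (subset_univ W) fun x _ hx => by rw [R.degree_eq_zero_of_notMem hW hx, hf]

lemma sum_ite_adj_eq_degree (hW : ∀ x y, R.Adj x y → x ∈ W) (x : α) :
    ∑ y ∈ W, (if R.Adj x y then 1 else 0) = R.degree x := by
  rw [sum_boole, Nat.cast_id, ← card_neighborFinset_eq_degree, neighborFinset_eq_filter]
  congr 1
  ext y
  simpa using fun h => hW y x h.symm

end Degree

variable {α : Type*} [DecidableEq α]

lemma filter_powersetCard_three_eq {W : Finset α} {x y z : α} (hx : x ∈ W) (hy : y ∈ W)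
    (hz : z ∈ W) (hxy : x ≠ y) (hxz : x ≠ z) (hyz : y ≠ z) :
    {A ∈ W.powersetCard 3 | x ∈ A ∧ y ∈ A ∧ z ∈ A} = {{x, y, z}} := by
  have hcard : #({x, y, z} : Finset α) = 3 := card_eq_three.2 ⟨x, y, z, hxy, hxz, hyz, rfl⟩
  ext A
  simp only [mem_filter, mem_powersetCard, mem_singleton]
  constructor
  · rintro ⟨⟨-, hA⟩, hxA, hyA, hzA⟩
    refine (eq_of_subset_of_card_le ?_ (by rw [hA, hcard])).symm
    simp [insert_subset_iff, hxA, hyA, hzA]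
  · rintro rfl
    simp [insert_subset_iff, hx, hy, hz, hcard]

lemma sum_powersetCard_three_sum_triples (W : Finset α) (f : α → α → α → ℕ)
    (hf : ∀ x y z, f x y z ≠ 0 → x ≠ y ∧ x ≠ z ∧ y ≠ z) :
    ∑ A ∈ W.powersetCard 3, ∑ x ∈ A, ∑ y ∈ A, ∑ z ∈ A, f x y z =
      ∑ x ∈ W, ∑ y ∈ W, ∑ z ∈ W, f x y z := by
  have hterm : ∀ x ∈ W, ∀ y ∈ W, ∀ z ∈ W, f x y z =
      ∑ A ∈ W.powersetCard 3, if x ∈ A then if y ∈ A then if z ∈ A then f x y z else 0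
        else 0 else 0 := by
    intro x hx y hy z hz
    by_cases h0 : f x y z = 0
    · simp [h0]
    obtain ⟨hxy, hxz, hyz⟩ := hf x y z h0
    simp only [← ite_and, ← sum_filter, filter_powersetCard_three_eq hx hy hz hxy hxz hyz,
      sum_singleton]
  rw [sum_congr rfl fun x hx => sum_congr rfl fun y hy => sum_congr rfl fun z hz =>
    hterm x hx y hy z hz]
  simp_rw [sum_comm (s := W) (t := W.powersetCard 3)]
  refine sum_congr rfl fun A hA => ?_
  simp only [sum_ite_irrel, sum_const_zero, ← sum_filter, filter_mem_eq_inter,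
    inter_eq_right.2 (mem_powersetCard.1 hA).1]

variable (R : SimpleGraph α)

noncomputable def edgeTriple (x y z : α) : ℕ := if R.Adj x y ∧ z ≠ x ∧ z ≠ y then 1 else 0

noncomputable def cherry (x y z : α) : ℕ := if R.Adj x y ∧ R.Adj x z ∧ y ≠ z then 1 else 0

lemma edgeTriple_ne_zero {x y z : α} (h : R.edgeTriple x y z ≠ 0) :
    x ≠ y ∧ x ≠ z ∧ y ≠ z := by
  unfold edgeTriple at h
  split_ifs at h with hc
  · exact ⟨hc.1.ne, Ne.symm hc.2.1, Ne.symm hc.2.2⟩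
  · exact absurd rfl h

lemma cherry_ne_zero {x y z : α} (h : R.cherry x y z ≠ 0) : x ≠ y ∧ x ≠ z ∧ y ≠ z := by
  unfold cherry at h
  split_ifs at h with hc
  · exact ⟨hc.1.ne, hc.2.1.ne, hc.2.2⟩
  · exact absurd rfl h

/-- On a triple spanning `p` edges of `R` the two sums are `2p` and `2 * p.choose 2`. -/
lemma sum_edgeTriple_add_le {A : Finset α} (hA : #A = 3) :
    ∑ x ∈ A, ∑ y ∈ A, ∑ z ∈ A, R.edgeTriple x y z + 2 * (if R.IsNClique 3 A then 1 else 0) ≤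
      2 * (if ∃ x ∈ A, ∃ y ∈ A, R.Adj x y then 1 else 0) +
        ∑ x ∈ A, ∑ y ∈ A, ∑ z ∈ A, R.cherry x y z := by
  obtain ⟨u, v, w, huv, huw, hvw, rfl⟩ := card_eq_three.1 hA
  have expand : ∀ f : α → ℕ, ∑ x ∈ {u, v, w}, f x = f u + f v + f w := fun f => by
    rw [sum_insert (by simp [huv, huw]), sum_insert (by simp [hvw]), sum_singleton, add_assoc]
  have hvu := R.adj_comm v u
  have hwu := R.adj_comm w u
  have hwv := R.adj_comm w v
  simp only [expand, edgeTriple, cherry, is3Clique_triple_iff, exists_mem_insert,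
    mem_singleton, exists_eq_left]
  by_cases huv' : R.Adj u v <;> by_cases huw' : R.Adj u w <;> by_cases hvw' : R.Adj v w <;>
    simp [huv, huw, hvw, huv.symm, huw.symm, hvw.symm, huv', huw', hvw', hvu, hwu, hwv]

variable [Fintype α] {W : Finset α}

lemma sum_edgeTriple_add_four_mul (hW : ∀ x y, R.Adj x y → x ∈ W) :
    ∑ x ∈ W, ∑ y ∈ W, ∑ z ∈ W, R.edgeTriple x y z + 4 * #R.edgeFinset =
      2 * #R.edgeFinset * #W := by
  have hthird : ∀ x ∈ W, ∀ y ∈ W, ∑ z ∈ W, R.edgeTriple x y z + 2 * (if R.Adj x y then 1 else 0) =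
      (if R.Adj x y then 1 else 0) * #W := by
    intro x hx y hy
    by_cases hxy : R.Adj x y
    · have hfilter : {z ∈ W | z ≠ x ∧ z ≠ y} = (W.erase x).erase y := by
        ext z
        simp only [mem_filter, mem_erase]
        tauto
      have hyx : y ∈ W.erase x := mem_erase.2 ⟨hxy.ne.symm, hy⟩
      simp only [edgeTriple, hxy, true_and, if_true, sum_boole, Nat.cast_id, hfilter]
      rw [card_erase_of_mem hyx, card_erase_of_mem hx]
      have : 2 ≤ #W := one_lt_card.2 ⟨x, hx, y, hy, hxy.ne⟩
      omega
    · simp [edgeTriple, hxy]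
  have hpairs : ∑ x ∈ W, ∑ y ∈ W, (if R.Adj x y then 1 else 0) = 2 * #R.edgeFinset := by
    simp_rw [R.sum_ite_adj_eq_degree hW]
    exact (R.sum_comp_degree_eq_of_adj_mem hW id rfl).trans R.sum_degrees_eq_twice_card_edges
  calc ∑ x ∈ W, ∑ y ∈ W, ∑ z ∈ W, R.edgeTriple x y z + 4 * #R.edgeFinset
      = ∑ x ∈ W, ∑ y ∈ W, (∑ z ∈ W, R.edgeTriple x y z + 2 * (if R.Adj x y then 1 else 0)) := by
        simp only [sum_add_distrib, ← mul_sum, hpairs]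
        ring
    _ = 2 * #R.edgeFinset * #W := by
        rw [sum_congr rfl fun x hx => sum_congr rfl fun y hy => hthird x hx y hy]
        simp only [← sum_mul, hpairs]

lemma sum_cherry (hW : ∀ x y, R.Adj x y → x ∈ W) :
    ∑ x ∈ W, ∑ y ∈ W, ∑ z ∈ W, R.cherry x y z = 2 * ∑ v, (R.degree v).choose 2 := by
  have hcentre : ∀ x, ∑ y ∈ W, ∑ z ∈ W, R.cherry x y z = 2 * (R.degree x).choose 2 := by
    intro x
    have hfilter : {p ∈ W ×ˢ W | R.Adj x p.1 ∧ R.Adj x p.2 ∧ p.1 ≠ p.2} =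
        (R.neighborFinset x).offDiag := by
      ext ⟨y, z⟩
      simp only [mem_filter, mem_product, mem_offDiag, mem_neighborFinset]
      exact ⟨fun h => h.2, fun h => ⟨⟨hW y x h.1.symm, hW z x h.2.1.symm⟩, h⟩⟩
    rw [← sum_product' (f := fun y z => R.cherry x y z)]
    simp only [cherry, sum_boole, Nat.cast_id, hfilter, offDiag_card,
      card_neighborFinset_eq_degree]
    rw [Nat.choose_two_right, Nat.mul_div_cancel' (Nat.even_mul_pred_self _).two_dvd,
      Nat.mul_sub_one]
  rw [sum_congr rfl fun x _ => hcentre x, ← mul_sum,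
    R.sum_comp_degree_eq_of_adj_mem hW (fun d => d.choose 2) rfl]

lemma filter_isNClique_powersetCard_eq (hW : ∀ x y, R.Adj x y → x ∈ W) :
    {A ∈ W.powersetCard 3 | R.IsNClique 3 A} = R.cliqueFinset 3 := by
  ext A
  simp only [mem_filter, mem_powersetCard, mem_cliqueFinset_iff]
  refine ⟨fun h => h.2, fun h => ⟨⟨fun x hx => ?_, h.card_eq⟩, h⟩⟩
  obtain ⟨y, hy, hxy⟩ := exists_mem_ne (by rw [h.card_eq]; norm_num) x
  exact hW x y (h.isClique hx hy hxy.symm)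

theorem card_edgeFinset_mul_card_add_card_cliqueFinset_le
    (hW : ∀ x y, R.Adj x y → x ∈ W) :
    #R.edgeFinset * #W + #(R.cliqueFinset 3) ≤
      #{A ∈ W.powersetCard 3 | ∃ x ∈ A, ∃ y ∈ A, R.Adj x y} + ∑ v, (R.degree v).choose 2 +
        2 * #R.edgeFinset := by
  have hpointwise := sum_le_sum (s := W.powersetCard 3) fun A hA =>
    R.sum_edgeTriple_add_le (mem_powersetCard.1 hA).2
  simp only [sum_add_distrib, ← mul_sum, sum_boole, Nat.cast_id,
    filter_isNClique_powersetCard_eq R hW,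
    sum_powersetCard_three_sum_triples W _ fun _ _ _ => R.edgeTriple_ne_zero,
    sum_powersetCard_three_sum_triples W _ fun _ _ _ => R.cherry_ne_zero,
    R.sum_cherry hW] at hpointwise
  have := R.sum_edgeTriple_add_four_mul hW
  linarith

lemma card_filter_cliqueFinset_three_le (G : SimpleGraph α) {u v : α} (huv : G.Adj u v) :
    #{A ∈ G.cliqueFinset 3 | u ∈ A ∧ v ∈ A} ≤ #(G.neighborFinset u ∩ G.neighborFinset v) := by
  refine (card_le_card fun A hA => ?_).trans
    (card_image_le (f := fun z => ({u, v, z} : Finset α)))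
  obtain ⟨hA, huA, hvA⟩ := mem_filter.1 hA
  have hA := mem_cliqueFinset_iff.1 hA
  obtain ⟨z, hzA, hz⟩ := exists_mem_notMem_of_card_lt_card (s := {u, v}) (t := A)
    (by rw [hA.card_eq, card_pair huv.ne]; norm_num)
  simp only [mem_insert, mem_singleton, not_or] at hz
  have hcard : #({u, v, z} : Finset α) = 3 :=
    card_eq_three.2 ⟨u, v, z, huv.ne, Ne.symm hz.1, Ne.symm hz.2, rfl⟩
  refine mem_image.2 ⟨z, ?_, eq_of_subset_of_card_le ?_ (by rw [hA.card_eq, hcard])⟩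
  · simp only [mem_inter, mem_neighborFinset]
    exact ⟨hA.isClique huA hzA (Ne.symm hz.1), hA.isClique hvA hzA (Ne.symm hz.2)⟩
  · simp [insert_subset_iff, huA, hvA, hzA]

end SimpleGraph

open SimpleGraph

section Folding

variable {G : SimpleGraph V} {T : Finset V}

lemma mem_commonNbrs {u : V} : u ∈ commonNbrs G T ↔ ∀ v ∈ T, G.Adj v u := by
  simp [commonNbrs]

lemma disjoint_commonNbrs : Disjoint T (commonNbrs G T) :=
  disjoint_left.2 fun v hv hS => G.irrefl (mem_commonNbrs.1 hS v hv)

lemma card_union_commonNbrs : #(T ∪ commonNbrs G T) = #T + #(commonNbrs G T) :=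
  card_union_of_disjoint disjoint_commonNbrs

lemma subset_neighborFinset_of_mem_commonNbrs {u : V} (hu : u ∈ commonNbrs G T) :
    T ⊆ G.neighborFinset u :=
  fun v hv => (mem_neighborFinset G u v).2 (mem_commonNbrs.1 hu v hv).symm

lemma folding_adj_of_adj {u v : V} (huv : G.Adj u v) (hb : ¬IsBlueEdge G T u v) :
    (folding G T).Adj u v :=
  ⟨huv.ne, Or.inl huv, hb⟩

lemma isClique_folding (hT : G.IsClique T) :
    (folding G T).IsClique (T ∪ commonNbrs G T : Finset V) := by
  intro u hu v hv huv
  rw [mem_coe] at hu hv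
  refine ⟨huv, ?_, fun hb => ?_⟩
  · rcases mem_union.1 hu with hu | hu <;> rcases mem_union.1 hv with hv | hv
    · exact Or.inl (hT hu hv huv)
    · exact Or.inl (mem_commonNbrs.1 hv u hu)
    · exact Or.inl (mem_commonNbrs.1 hu v hv).symm
    · exact Or.inr ⟨hu, hv⟩
  · rcases hb.2 with ⟨-, hv'⟩ | ⟨-, hu'⟩
    exacts [hv' hv, hu' hu]

lemma filter_powersetCard_subset_sdiff_cliqueFinset (hT : G.IsClique T) :
    {A ∈ (T ∪ commonNbrs G T).powersetCard 3 |
        ∃ x ∈ A, ∃ y ∈ A, (redGraph G (commonNbrs G T)).Adj x y} ⊆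
      (folding G T).cliqueFinset 3 \ G.cliqueFinset 3 := by
  intro A hA
  obtain ⟨hAW, hA3⟩ := mem_powersetCard.1 (mem_filter.1 hA).1
  obtain ⟨x, hx, y, hy, hxy⟩ := (mem_filter.1 hA).2
  refine mem_sdiff.2 ⟨mem_cliqueFinset_iff.2 ⟨(isClique_folding hT).subset ?_, hA3⟩, fun hG => ?_⟩
  · exact_mod_cast hAW
  · exact hxy.2.2.2 ((mem_cliqueFinset_iff.1 hG).isClique hx hy hxy.2.2.1)

lemma folding_eq_sup :
    folding G T = (G \ blueGraph G T) ⊔ redGraph G (commonNbrs G T) := by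
  ext u v
  simp only [sup_adj, sdiff_adj]
  constructor
  · rintro ⟨huv, hG | hS, hb⟩
    · exact Or.inl ⟨hG, hb⟩
    · by_cases hG : G.Adj u v
      · exact Or.inl ⟨hG, hb⟩
      · exact Or.inr ⟨hS.1, hS.2, huv, hG⟩
  · rintro (⟨hG, hb⟩ | ⟨hu, hv, huv, hG⟩)
    · exact folding_adj_of_adj hG hb
    · exact ⟨huv, Or.inr ⟨hu, hv⟩, fun hb => hG hb.1⟩

lemma card_edgeFinset_folding_add_le :
    #(folding G T).edgeFinset + #(blueGraph G T).edgeFinset ≤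
      #G.edgeFinset + #(redGraph G (commonNbrs G T)).edgeFinset := by
  have hB : (blueGraph G T).edgeFinset ⊆ G.edgeFinset := edgeFinset_mono fun _ _ h => h.1
  have hE : (folding G T).edgeFinset =
      (G.edgeFinset \ (blueGraph G T).edgeFinset) ∪ (redGraph G (commonNbrs G T)).edgeFinset := by
    ext e
    simp only [mem_union, mem_sdiff, mem_edgeFinset, folding_eq_sup, edgeSet_sup, edgeSet_sdiff,
      Set.mem_union, Set.mem_sdiff]
  have hunion := card_union_le (G.edgeFinset \ (blueGraph G T).edgeFinset)
    (redGraph G (commonNbrs G T)).edgeFinset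
  have hsdiff := card_sdiff_add_card_eq_card hB
  rw [hE]
  omega

/-- The blue edges `uv`, oriented from their endpoint `u ∈ S_T`. -/
noncomputable def blueDarts (G : SimpleGraph V) (T : Finset V) : Finset (Σ _ : V, V) :=
  (commonNbrs G T).sigma fun u => G.neighborFinset u \ (T ∪ commonNbrs G T)

variable {r : ℕ}

lemma mem_union_commonNbrs_of_adj (hΔ : G.maxDegree ≤ r)
    (hTS : #T + #(commonNbrs G T) = r + 1) (hT : G.IsClique T) {v u : V} (hv : v ∈ T)
    (hvu : G.Adj v u) : u ∈ T ∪ commonNbrs G T := by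
  have hsub : (T ∪ commonNbrs G T).erase v ⊆ G.neighborFinset v := by
    intro w hw
    obtain ⟨hwv, hw⟩ := mem_erase.1 hw
    rw [mem_neighborFinset]
    rcases mem_union.1 hw with hw | hw
    · exact hT hv hw hwv.symm
    · exact mem_commonNbrs.1 hw v hv
  have hcard : #(G.neighborFinset v) ≤ #((T ∪ commonNbrs G T).erase v) := by
    rw [card_erase_of_mem (mem_union_left _ hv), card_union_commonNbrs,
      card_neighborFinset_eq_degree]
    have := G.degree_le_maxDegree v
    omega
  have hN := eq_of_subset_of_card_le hsub hcard
  exact mem_of_mem_erase (hN ▸ (mem_neighborFinset G v u).2 hvu)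

lemma card_neighborFinset_sdiff_le_degree_redGraph (hΔ : G.maxDegree ≤ r)
    (hTS : #T + #(commonNbrs G T) = r + 1) {u : V} (hu : u ∈ commonNbrs G T) :
    #(G.neighborFinset u \ (T ∪ commonNbrs G T)) ≤ (redGraph G (commonNbrs G T)).degree u := by
  have hcover : (T ∪ commonNbrs G T).erase u ⊆ (G.neighborFinset u ∩ (T ∪ commonNbrs G T)) ∪
      (redGraph G (commonNbrs G T)).neighborFinset u := by
    intro w hw
    obtain ⟨hwu, hw⟩ := mem_erase.1 hw
    rw [mem_union, mem_inter, mem_neighborFinset, mem_neighborFinset]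
    rcases mem_union.1 hw with hwT | hwS
    · exact Or.inl ⟨(mem_commonNbrs.1 hu w hwT).symm, hw⟩
    · by_cases huw : G.Adj u w
      · exact Or.inl ⟨huw, hw⟩
      · exact Or.inr ⟨hu, hwS, hwu.symm, huw⟩
  have h1 := (card_le_card hcover).trans (card_union_le _ _)
  have h2 := card_inter_add_card_sdiff (G.neighborFinset u) (T ∪ commonNbrs G T)
  rw [card_erase_of_mem (mem_union_right _ hu), card_union_commonNbrs,
    card_neighborFinset_eq_degree] at h1
  rw [card_neighborFinset_eq_degree] at h2
  have := G.degree_le_maxDegree u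
  omega

lemma card_filter_cliqueFinset_three_add_two_le (hΔ : G.maxDegree ≤ r)
    (hTS : #T + #(commonNbrs G T) = r + 1) (hT : G.IsClique T) {u v : V}
    (hu : u ∈ commonNbrs G T) (hv : v ∉ T ∪ commonNbrs G T) (huv : G.Adj u v) :
    #{A ∈ G.cliqueFinset 3 | u ∈ A ∧ v ∈ A} + 2 ≤ #(commonNbrs G T) := by
  have hvT : v ∉ T := fun h => hv (mem_union_left _ h)
  have hsub : insert v T ⊆ G.neighborFinset u :=
    insert_subset ((mem_neighborFinset G u v).2 huv) (subset_neighborFinset_of_mem_commonNbrs hu)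
  have hthird : G.neighborFinset u ∩ G.neighborFinset v ⊆ G.neighborFinset u \ insert v T := by
    intro z hz
    simp only [mem_inter, mem_neighborFinset] at hz
    simp only [mem_sdiff, mem_insert, mem_neighborFinset, not_or]
    exact ⟨hz.1, hz.2.ne.symm, fun hzT => hv (mem_union_commonNbrs_of_adj hΔ hTS hT hzT hz.2.symm)⟩
  have h1 := (G.card_filter_cliqueFinset_three_le huv).trans (card_le_card hthird)
  have h2 := card_le_card hsub
  rw [card_sdiff_of_subset hsub] at h1
  rw [card_insert_of_notMem hvT, card_neighborFinset_eq_degree] at h1 h2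
  have := G.degree_le_maxDegree u
  omega

lemma degree_folding_le (hΔ : G.maxDegree ≤ r) (hTS : #T + #(commonNbrs G T) = r + 1) (v : V) :
    (folding G T).degree v ≤ r := by
  by_cases hv : v ∈ commonNbrs G T
  · have hsub : (folding G T).neighborFinset v ⊆ (T ∪ commonNbrs G T).erase v := by
      intro u hu
      obtain ⟨hvu, hG | hS, hb⟩ := (mem_neighborFinset _ v u).1 hu
      · refine mem_erase.2 ⟨hvu.symm, ?_⟩
        by_contra hu
        exact hb ⟨hG, Or.inl ⟨hv, hu⟩⟩
      · exact mem_erase.2 ⟨hvu.symm, mem_union_right _ hS.2⟩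
    have := card_le_card hsub
    rw [card_erase_of_mem (mem_union_right _ hv), card_union_commonNbrs,
      card_neighborFinset_eq_degree] at this
    omega
  · have hsub : (folding G T).neighborFinset v ⊆ G.neighborFinset v := by
      intro u hu
      obtain ⟨-, hG | hS, -⟩ := (mem_neighborFinset _ v u).1 hu
      · exact (mem_neighborFinset G v u).2 hG
      · exact absurd hS.1 hv
    have := card_le_card hsub
    rw [card_neighborFinset_eq_degree, card_neighborFinset_eq_degree] at this
    exact this.trans ((G.degree_le_maxDegree v).trans hΔ)

lemma card_blueDarts_le (hΔ : G.maxDegree ≤ r) (hTS : #T + #(commonNbrs G T) = r + 1) :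
    #(blueDarts G T) ≤ 2 * #(redGraph G (commonNbrs G T)).edgeFinset := by
  calc #(blueDarts G T)
      = ∑ u ∈ commonNbrs G T, #(G.neighborFinset u \ (T ∪ commonNbrs G T)) := card_sigma _ _
    _ ≤ ∑ u ∈ commonNbrs G T, (redGraph G (commonNbrs G T)).degree u :=
      sum_le_sum fun u hu => card_neighborFinset_sdiff_le_degree_redGraph hΔ hTS hu
    _ = ∑ u, (redGraph G (commonNbrs G T)).degree u :=
      sum_comp_degree_eq_of_adj_mem (redGraph G (commonNbrs G T)) (fun _ _ h => h.1) id rfl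
    _ = 2 * #(redGraph G (commonNbrs G T)).edgeFinset := sum_degrees_eq_twice_card_edges _

lemma two_le_card_filter_blueDarts (hΔ : G.maxDegree ≤ r)
    (hTS : #T + #(commonNbrs G T) = r + 1) (hT : G.IsClique T) {A : Finset V}
    (hG : A ∈ G.cliqueFinset 3) (hF : A ∉ (folding G T).cliqueFinset 3) :
    2 ≤ #{p ∈ blueDarts G T | p.1 ∈ A ∧ p.2 ∈ A} := by
  rw [mem_cliqueFinset_iff] at hG
  have hnot : ¬(folding G T).IsClique (A : Set V) :=
    fun h => hF (mem_cliqueFinset_iff.2 ⟨h, hG.card_eq⟩)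
  simp only [isClique_iff, Set.Pairwise, mem_coe, not_forall] at hnot
  obtain ⟨x, hx, y, hy, hxy, hF⟩ := hnot
  have hGxy := hG.isClique hx hy hxy
  have hblue : IsBlueEdge G T x y := by
    by_contra hb
    exact hF (folding_adj_of_adj hGxy hb)
  obtain ⟨a, ha, b, hb, haS, hbW, hab⟩ : ∃ a ∈ A, ∃ b ∈ A,
      a ∈ commonNbrs G T ∧ b ∉ T ∪ commonNbrs G T ∧ G.Adj a b := by
    rcases hblue.2 with ⟨h1, h2⟩ | ⟨h1, h2⟩
    exacts [⟨x, hx, y, hy, h1, h2, hGxy⟩, ⟨y, hy, x, hx, h1, h2, hGxy.symm⟩]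
  obtain ⟨c, hcA, hc⟩ := exists_mem_notMem_of_card_lt_card (s := {a, b}) (t := A)
    (by rw [hG.card_eq, card_pair hab.ne]; norm_num)
  simp only [mem_insert, mem_singleton, not_or] at hc
  have hac := hG.isClique ha hcA (Ne.symm hc.1)
  have hbc := hG.isClique hb hcA (Ne.symm hc.2)
  have hcT : c ∉ T := fun hcT => hbW (mem_union_commonNbrs_of_adj hΔ hTS hT hcT hbc.symm)
  have hdart : ∀ {u v}, u ∈ A → v ∈ A → u ∈ commonNbrs G T → v ∉ T ∪ commonNbrs G T →
      G.Adj u v → (⟨u, v⟩ : Σ _ : V, V) ∈ {p ∈ blueDarts G T | p.1 ∈ A ∧ p.2 ∈ A} := by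
    intro u v hu hv huS hvW huv
    simp only [blueDarts, mem_filter, mem_sigma, mem_sdiff, mem_neighborFinset]
    exact ⟨⟨huS, huv, hvW⟩, hu, hv⟩
  refine one_lt_card.2 ?_
  by_cases hcS : c ∈ commonNbrs G T
  · refine ⟨_, hdart ha hb haS hbW hab, _, hdart hcA hb hcS hbW hbc.symm, ?_⟩
    simp [Ne.symm hc.1]
  · have hcW : c ∉ T ∪ commonNbrs G T := by simp [hcT, hcS]
    refine ⟨_, hdart ha hb haS hbW hab, _, hdart ha hcA haS hcW hac, ?_⟩
    simp [Ne.symm hc.2]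

lemma two_le_card_commonNbrs_of_mem_edgeFinset {e : Sym2 V}
    (he : e ∈ (redGraph G (commonNbrs G T)).edgeFinset) : 2 ≤ #(commonNbrs G T) := by
  induction e using Sym2.ind with
  | h x y => exact one_lt_card.2 ⟨x, (mem_edgeFinset.1 he).1, y, (mem_edgeFinset.1 he).2.1,
    (mem_edgeFinset.1 he).2.2.1⟩

theorem card_sdiff_cliqueFinset_folding_add_le (hΔ : G.maxDegree ≤ r)
    (hTS : #T + #(commonNbrs G T) = r + 1) (hT : G.IsClique T) :
    #(G.cliqueFinset 3 \ (folding G T).cliqueFinset 3) +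
        2 * #(redGraph G (commonNbrs G T)).edgeFinset ≤
      #(redGraph G (commonNbrs G T)).edgeFinset * #(commonNbrs G T) := by
  have hdouble := card_mul_le_card_mul (fun A (p : Σ _ : V, V) => p.1 ∈ A ∧ p.2 ∈ A)
    (s := G.cliqueFinset 3 \ (folding G T).cliqueFinset 3) (t := blueDarts G T)
    (m := 2) (n := #(commonNbrs G T) - 2)
    (fun A hA => two_le_card_filter_blueDarts hΔ hTS hT (mem_sdiff.1 hA).1 (mem_sdiff.1 hA).2)
    (fun ⟨u, v⟩ hp => by
      obtain ⟨hu, hv⟩ := mem_sigma.1 hp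
      obtain ⟨huv, hvW⟩ := mem_sdiff.1 hv
      have hthrough := card_filter_cliqueFinset_three_add_two_le hΔ hTS hT hu hvW
        ((mem_neighborFinset G u v).1 huv)
      have hsub := card_le_card (filter_subset_filter (fun A => u ∈ A ∧ v ∈ A)
        (sdiff_subset : G.cliqueFinset 3 \ (folding G T).cliqueFinset 3 ⊆ G.cliqueFinset 3))
      dsimp only [bipartiteBelow] at hthrough ⊢
      omega)
  have hdarts := card_blueDarts_le hΔ hTS
  rcases (redGraph G (commonNbrs G T)).edgeFinset.eq_empty_or_nonempty with he | ⟨e, he⟩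
  · rw [he, card_empty] at hdarts ⊢
    rw [Nat.le_zero.1 hdarts, zero_mul] at hdouble
    omega
  · obtain ⟨k, hk⟩ := Nat.exists_eq_add_of_le' (two_le_card_commonNbrs_of_mem_edgeFinset he)
    rw [hk, Nat.add_sub_cancel] at hdouble
    rw [hk]
    nlinarith

end Folding

/-- If `T` is a cluster of `G` (with `m` edges and maximum degree at most `r`) such that
`e(B_T) ≥ e(R_T)`, then folding `G` at `T` gains at least `Q(R)` triangles, where
`Q(R) = (r + 1 − s)·e(R) + k₃(R) − Σ_{v ∈ S_T} C(d_R(v), 2)`; moreover the folding has at most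
`m` edges and maximum degree at most `r`. -/
theorem folding_gain {V : Type} [Fintype V] [DecidableEq V]
    (G : SimpleGraph V) (r m : ℕ)
    (hm : G.edgeFinset.card = m) (hΔ : G.maxDegree ≤ r)
    (T : Finset V) (hT : IsCluster G r T)
    (hTS : T.card + (commonNbrs G T).card = r + 1)
    (hRB : (redGraph G (commonNbrs G T)).edgeFinset.card ≤
      (blueGraph G T).edgeFinset.card) :
    ((((folding G T).cliqueFinset 3).card : ℤ) - ((G.cliqueFinset 3).card : ℤ) ≥
      ((r : ℤ) + 1 - ((commonNbrs G T).card : ℤ)) *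
          ((redGraph G (commonNbrs G T)).edgeFinset.card : ℤ) +
        (((redGraph G (commonNbrs G T)).cliqueFinset 3).card : ℤ) -
        ∑ v ∈ commonNbrs G T, (((redGraph G (commonNbrs G T)).degree v).choose 2 : ℤ)) ∧
      (folding G T).edgeFinset.card ≤ m ∧ (folding G T).maxDegree ≤ r := by
  obtain ⟨⟨hT, -⟩, -⟩ := hT
  refine ⟨?_, ?_, maxDegree_le_of_forall_degree_le _ _ (degree_folding_le hΔ hTS)⟩
  · have hgained := card_le_card (filter_powersetCard_subset_sdiff_cliqueFinset hT)
    have hcount := (redGraph G (commonNbrs G T)).card_edgeFinset_mul_card_add_card_cliqueFinset_le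
      (W := T ∪ commonNbrs G T) fun _ _ h => mem_union_right _ h.1
    have hlost := card_sdiff_cliqueFinset_folding_add_le hΔ hTS hT
    rw [← sum_comp_degree_eq_of_adj_mem (redGraph G (commonNbrs G T)) (W := commonNbrs G T)
      (fun _ _ h => h.1) (fun d => d.choose 2) rfl, card_union_commonNbrs] at hcount
    have hr : (r : ℤ) + 1 = #T + #(commonNbrs G T) := by exact_mod_cast hTS.symm
    rw [Finset.natCast_card_sub_natCast_card, hr]
    zify at hgained hcount hlost
    linarith
  · have := card_edgeFinset_folding_add_le (G := G) (T := T)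
    omega
end

section
/- Let r ≥ 1, m ≥ C(r+1,2) + 1, and k = ⌈r/2⌉. Define the weight function w on {0, 1, …, r} by w(d) = C(d,2) for d ≤ r−1 and w(r) = C(r,2) − k. Then for every finite multiset D of integers from {0, 1, …, r} with Σ_{d ∈ D} d = 2m, one has Σ_{d ∈ D} w(d) ≤ (r − 2)·m; that is, 3·M_k(m,r) ≤ (r − 2)·m. -/
/-!
Twice the weight of each entry is bounded linearly: `2 w(d) ≤ (r - 2) d` for every `0 ≤ d ≤ r`.
For `d < r` this is `d (d - 1) ≤ d (r - 2)`; for `d = r` the penalty `k = ⌈r/2⌉` satisfies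
`2k ≥ r`, which turns `r (r - 1) - 2k` into at most `r (r - 2)`. Summing over `D` and using
`Σ d = 2m` gives the bound.
-/

/-- The weight `w(d)` of the statement, with `k = (r + 1) / 2 = ⌈r/2⌉`. -/
def degreeWeight (r d : ℕ) : ℤ :=
  if d = r then (r.choose 2 : ℤ) - (((r + 1) / 2 : ℕ) : ℤ) else ((d.choose 2 : ℕ) : ℤ)

lemma two_mul_cast_choose_two (n : ℕ) : 2 * (n.choose 2 : ℤ) = n * (n - 1) := by
  have h : ((2 * (n.choose 2 : ℤ) : ℤ) : ℚ) = ((n * (n - 1) : ℤ) : ℚ) := by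
    push_cast
    rw [Nat.cast_choose_two ℚ n]
    ring
  exact_mod_cast h

lemma two_mul_degreeWeight_le {r d : ℕ} (hd : d ≤ r) :
    2 * degreeWeight r d ≤ ((r : ℤ) - 2) * d := by
  unfold degreeWeight
  split_ifs with hdr
  · subst hdr
    have hk : (d : ℤ) ≤ 2 * (((d + 1) / 2 : ℕ) : ℤ) := by omega
    nlinarith [two_mul_cast_choose_two d]
  · have hlt : (d : ℤ) + 1 ≤ r := by omega
    nlinarith [two_mul_cast_choose_two d, Int.natCast_nonneg d]

lemma Multiset.sum_map_le_mul_sum {D : Multiset ℕ} {f : ℕ → ℤ} {c : ℤ}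
    (h : ∀ d ∈ D, f d ≤ c * d) : (D.map f).sum ≤ c * D.sum := by
  calc (D.map f).sum ≤ (D.map fun d : ℕ => c * d).sum := Multiset.sum_map_le_sum_map _ _ h
    _ = c * D.sum := by rw [Multiset.sum_map_mul_left, Nat.cast_multiset_sum]

theorem multiset_weight_bound_general (r m : ℕ)
    (D : Multiset ℕ) (hD : ∀ d ∈ D, d ≤ r) (hsum : D.sum = 2 * m) :
    (D.map (fun d => if d = r then (r.choose 2 : ℤ) - (((r + 1) / 2 : ℕ) : ℤ)
      else ((d.choose 2 : ℕ) : ℤ))).sum ≤ ((r : ℤ) - 2) * (m : ℤ) := by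
  have hdouble : 2 * (D.map (degreeWeight r)).sum ≤ ((r : ℤ) - 2) * D.sum := by
    rw [← Multiset.sum_map_mul_left]
    exact Multiset.sum_map_le_mul_sum fun d hd => two_mul_degreeWeight_le (hD d hd)
  change (D.map (degreeWeight r)).sum ≤ _
  rw [hsum] at hdouble
  push_cast at hdouble
  linarith

/-- Degree multiset optimization: for `r ≥ 1`, `m ≥ C(r+1,2) + 1` and `k = ⌈r/2⌉`, with the
weight function `w(d) = C(d,2)` for `d ≤ r − 1` and `w(r) = C(r,2) − k`, every finite multiset
`D` with entries in `{0, 1, …, r}` and `Σ_{d ∈ D} d = 2m` satisfies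
`Σ_{d ∈ D} w(d) ≤ (r − 2)·m`, i.e. `3·M_k(m,r) ≤ (r − 2)·m`. -/
theorem multiset_weight_bound (r m : ℕ) (hr : 1 ≤ r) (hm : (r + 1).choose 2 + 1 ≤ m)
    (D : Multiset ℕ) (hD : ∀ d ∈ D, d ≤ r) (hsum : D.sum = 2 * m) :
    (D.map (fun d => if d = r then (r.choose 2 : ℤ) - (((r + 1) / 2 : ℕ) : ℤ)
      else ((d.choose 2 : ℕ) : ℤ))).sum ≤ ((r : ℤ) - 2) * (m : ℤ) :=
  multiset_weight_bound_general r m D hD hsum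
end
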